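/- arXiv:2303.09196 — 4 statements merged into one kernel-verified Lean document; each statement's English description precedes it below -/
import Mathlib

section
/- For every natural number n ≥ 1, the cone K^n = {x ∈ ℝ^n : ∑_{i=1}^k x_i ≥ 0 for all k ∈ {1,…,n−1} and ∑_{i=1}^n x_i = 0} is equal to the polar cone of the monotone cone ℝ^n_↑ = {x ∈ ℝ^n : x_1 ≤ x_2 ≤ ⋯ ≤ x_n}; that is, K^n = {y ∈ ℝ^n : ⟨x, y⟩ ≤ 0 for all x ∈ ℝ^n_↑}. -/
/-- The majorization cone `K^n`:
partial sums `∑_{i=1}^k x_i ≥ 0` for `k ∈ {1,…,n-1}` and `∑_{i=1}^n x_i = 0`. -/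
def majorCone (n : ℕ) : Set (Fin n → ℝ) :=
  {x | (∀ k : ℕ, k < n →
          0 ≤ ∑ i ∈ Finset.univ.filter (fun i : Fin n => (i : ℕ) < k), x i) ∧
        ∑ i, x i = 0}

lemma filter_sum_eq_range (n : ℕ) (y : Fin n → ℝ) (k : ℕ) (hk : k ≤ n) :
    ∑ i ∈ Finset.univ.filter (fun i : Fin n => (i : ℕ) < k), y i
      = ∑ i ∈ Finset.range k, (fun i => if h : i < n then y ⟨i, h⟩ else 0) i := by
  set F : ℕ → ℝ := fun j => if h : j < n then (if j < k then y ⟨j, h⟩ else 0) else 0 with hF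
  have h1 : ∑ i ∈ Finset.univ.filter (fun i : Fin n => (i : ℕ) < k), y i
      = ∑ i : Fin n, F ↑i := by
    rw [Finset.sum_filter]
    exact Finset.sum_congr rfl fun i _ => by simp [hF, i.is_lt]
  rw [h1, Fin.sum_univ_eq_sum_range,
    ← Finset.sum_subset (Finset.range_subset_range.mpr hk)
      (fun j _ hj => by simp only [Finset.mem_range, not_lt] at hj; simp [hF, hj, not_lt.mpr hj])]
  refine Finset.sum_congr rfl fun j hj => ?_
  simp only [Finset.mem_range] at hj
  simp [hF, hj, lt_of_lt_of_le hj hk]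

/-- for every `n ≥ 1`, the majorization cone `K^n` equals the polar cone of the
monotone cone `ℝ^n_↑ = {x : x_1 ≤ ⋯ ≤ x_n}`, i.e. `{y | ⟨x, y⟩ ≤ 0 for all monotone x}`. -/
theorem majorCone_eq_polar_monotoneCone (n : ℕ) (hn : 1 ≤ n) :
    majorCone n =
      {y : Fin n → ℝ | ∀ x : Fin n → ℝ, Monotone x → ∑ i, x i * y i ≤ 0} := by
  ext y
  constructor
  · rintro ⟨hpos, hsum⟩ x hx
    -- extend x and y to ℕ
    set f : ℕ → ℝ := fun i => x ⟨min i (n - 1), lt_of_le_of_lt (min_le_right _ _)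
      (Nat.sub_lt hn one_pos)⟩ with hf
    set g : ℕ → ℝ := fun i => if h : i < n then y ⟨i, h⟩ else 0 with hg
    have keyf : ∀ i : Fin n, (fun j => f j • g j) (↑i : ℕ) = x i * y i := by
      intro i
      simp only [hf, hg, dif_pos i.is_lt, smul_eq_mul]
      congr 1
      exact congrArg x (Fin.ext (Nat.min_eq_left (Nat.le_sub_one_of_lt i.is_lt)))
    have hfg : ∑ i, x i * y i = ∑ i ∈ Finset.range n, f i • g i := by
      rw [← Fin.sum_univ_eq_sum_range (fun j => f j • g j) n]
      exact (Finset.sum_congr rfl fun i _ => (keyf i).symm)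
    rw [hfg, Finset.sum_range_by_parts]
    have hGn : ∑ i ∈ Finset.range n, g i = 0 := by
      rw [← filter_sum_eq_range n y n le_rfl, ← hsum]
      apply Finset.sum_congr _ (fun _ _ => rfl)
      simp [Finset.filter_true_of_mem, Fin.is_lt]
    rw [hGn, smul_zero, zero_sub, neg_nonpos]
    apply Finset.sum_nonneg
    intro i hi
    simp only [Finset.mem_range] at hi
    have hi1 : i + 1 < n := by omega
    have h1 : 0 ≤ ∑ j ∈ Finset.range (i + 1), g j := by
      rw [← filter_sum_eq_range n y (i + 1) hi1.le]
      exact hpos (i + 1) hi1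
    have h2 : f i ≤ f (i + 1) := by
      apply hx
      simp only [Fin.mk_le_mk]
      exact min_le_min (Nat.le_succ i) le_rfl
    have := sub_nonneg.mpr h2
    exact smul_nonneg this h1
  · intro h
    constructor
    · intro k hk
      have hx : Monotone (fun i : Fin n => if (i : ℕ) < k then (-1 : ℝ) else 0) := by
        intro a b hab
        dsimp only
        by_cases ha : (a : ℕ) < k
        · by_cases hb : (b : ℕ) < k <;> simp [ha, hb]
        · have hb : ¬ (b : ℕ) < k := fun hb => ha (lt_of_le_of_lt (by exact_mod_cast hab) hb)
          simp [ha, hb]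
      have := h _ hx
      simp only [ite_mul, neg_one_mul, zero_mul, ← Finset.sum_filter] at this
      rw [Finset.sum_neg_distrib] at this
      linarith [this]
    · have h1 := h (fun _ => 1) monotone_const
      have h2 := h (fun _ => -1) monotone_const
      simp only [one_mul, neg_one_mul] at h1 h2
      rw [Finset.sum_neg_distrib] at h2
      linarith
end

section
/- Let n ≥ 1, let z ∈ ℝ^n satisfy z_1 ≤ z_2 ≤ ⋯ ≤ z_n, and let A ⊆ ℝ^n be nonempty. Then sup_{μ ∈ A + K^n} ⟨μ, z⟩ = sup_{μ ∈ A} ⟨μ, z⟩, where A + K^n denotes the Minkowski sum {a + s : a ∈ A, s ∈ K^n}. -/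
open Pointwise

lemma majorCone_inner_nonpos {n : ℕ} (hn : 1 ≤ n) (z : Fin n → ℝ) (hz : Monotone z)
    {s : Fin n → ℝ} (hs : s ∈ majorCone n) : ∑ i, s i * z i ≤ 0 := by
  obtain ⟨h1, h2⟩ := hs
  set s' : ℕ → ℝ := fun i => if h : i < n then s ⟨i, h⟩ else 0 with hs'
  set z' : ℕ → ℝ := fun i => z ⟨min i (n - 1), by omega⟩ with hz'
  -- partial sums of s' agree with the filter sums
  have hS : ∀ k, k ≤ n → ∑ i ∈ Finset.range k, s' i =
      ∑ i ∈ Finset.univ.filter (fun i : Fin n => (i : ℕ) < k), s i := by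
    intro k hk
    rw [Finset.sum_filter]
    have hc : ∀ a : Fin n, a ∈ Finset.univ → (if (a : ℕ) < k then s a else 0)
        = (fun i => if i < k then s' i else 0) (a : ℕ) := by
      intro a _; simp [hs', a.isLt]
    rw [Finset.sum_congr rfl hc,
      Fin.sum_univ_eq_sum_range (fun i => if i < k then s' i else 0) n]
    rw [← Finset.sum_subset (Finset.range_subset_range.2 hk)]
    · apply Finset.sum_congr rfl
      intro i hi
      simp only [Finset.mem_range] at hi
      simp [hi, hs', show i < n by omega]
    · intro i _ hi
      simp only [Finset.mem_range] at hi
      simp [hi]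
  have hSn : ∑ i ∈ Finset.range n, s' i = 0 := by
    rw [hS n le_rfl]
    rw [← h2]
    apply Finset.sum_congr _ (fun _ _ => rfl)
    ext i; simp [i.isLt]
  have hSk : ∀ k, k ≤ n → 0 ≤ ∑ i ∈ Finset.range k, s' i := by
    intro k hk
    rcases eq_or_lt_of_le hk with rfl | hk'
    · rw [hSn]
    · rw [hS k hk]; exact h1 k hk'
  have key : ∑ i ∈ Finset.range n, z' i • s' i ≤ 0 := by
    rw [Finset.sum_range_by_parts z' s' n, hSn, smul_zero, zero_sub, neg_nonpos]
    apply Finset.sum_nonneg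
    intro i hi
    simp only [Finset.mem_range] at hi
    apply smul_nonneg
    · simp only [sub_nonneg, z']
      exact hz (by simp only [Fin.mk_le_mk]; omega)
    · exact hSk (i + 1) (by omega)
  calc ∑ i, s i * z i = ∑ i ∈ Finset.range n, z' i • s' i := by
        rw [← Fin.sum_univ_eq_sum_range (fun i => z' i • s' i) n]
        apply Finset.sum_congr rfl
        intro i _
        simp only [smul_eq_mul, hs', hz', i.isLt, dif_pos]
        rw [mul_comm]
        congr 2 <;> simp [Fin.ext_iff] <;> omega
    _ ≤ 0 := key

/-- for `n ≥ 1`, a nondecreasing `z ∈ ℝ^n` and a nonempty `A ⊆ ℝ^n`,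
`sup_{μ ∈ A + K^n} ⟨μ, z⟩ = sup_{μ ∈ A} ⟨μ, z⟩`, where `A + K^n` is the Minkowski sum. -/
theorem sSup_inner_minkowski_majorCone (n : ℕ) (hn : 1 ≤ n) (z : Fin n → ℝ)
    (hz : Monotone z) (A : Set (Fin n → ℝ)) (hA : A.Nonempty) :
    sSup ((fun μ => ∑ i, μ i * z i) '' (A + majorCone n)) =
      sSup ((fun μ => ∑ i, μ i * z i) '' A) := by
  apply csSup_eq_csSup_of_forall_exists_le
  · rintro x ⟨μ, ⟨a, ha, s, hs, rfl⟩, rfl⟩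
    refine ⟨∑ i, a i * z i, ⟨a, ha, rfl⟩, ?_⟩
    have := majorCone_inner_nonpos hn z hz hs
    simp only [Pi.add_apply, add_mul, Finset.sum_add_distrib]
    linarith
  · rintro y ⟨a, ha, rfl⟩
    refine ⟨∑ i, a i * z i, ⟨a, ⟨a, ha, 0, ?_, by simp⟩, rfl⟩, le_rfl⟩
    constructor <;> simp [majorCone]
end

section
/- Let A ⊆ Δ^n be Lebesgue measurable and permutation invariant. Let Z be an integrable real random variable with cdf F(z) = P[Z ≤ z] and finite essential supremum, let Z_1,…,Z_{n−1} be iid random variables each with the same law as Z, and set Z_n := esssup Z. Let Z_(1) ≤ Z_(2) ≤ ⋯ ≤ Z_(n) denote the increasing rearrangement (order statistics) of Z_1,…,Z_n, and define the coverages W_i = F(Z_(i)) − F(Z_(i−1)) for i ∈ {1,…,n}, with the convention F(Z_(0)) := 0. Then P[ sup_{μ ∈ A} ∑_{i=1}^n μ_i Z_i ≥ E[Z] ] ≥ P[ W ∈ A + K^n ]. -/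
open MeasureTheory ProbabilityTheory Pointwise

/-- Increasing rearrangement (order statistics) of a finite tuple. -/
noncomputable def sortedVec {α : Type*} [LinearOrder α] {n : ℕ} (z : Fin n → α) : Fin n → α :=
  z ∘ Tuple.sort z

/-- The coverage `F(z_i) - F(z_{i-1})`, with the convention `F(z_0) := 0`. -/
noncomputable def coverage {n : ℕ} (F : ℝ → ℝ) (z : Fin n → ℝ) (i : Fin n) : ℝ :=
  F (z i) - (if h : 0 < (i : ℕ) then F (z ⟨(i : ℕ) - 1, by have := i.isLt; omega⟩) else 0)

/-- The full sample vector `(Z_1, …, Z_{n-1}, M)`. -/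
def fullVec {Ω : Type*} {n : ℕ} (Zs : Fin (n - 1) → Ω → ℝ) (M : ℝ) (i : Fin n) (ω : Ω) : ℝ :=
  if h : (i : ℕ) < n - 1 then Zs ⟨(i : ℕ), h⟩ ω else M

/-! The inclusion of events holds sample by sample. Let `y` be the increasing rearrangement of
the sample `(Z_1, …, Z_{n-1}, M)`; its top entry is at least `M = esssup Z`, so cutting `Ω` into the
slices `{y_{i-1} < Z ≤ y_i}` gives `E[Z] ≤ ∑ W_i y_i`. If `W = μ + x` with `μ ∈ A` and `x ∈ K^n`,
Abel summation against the increasing `y` gives `∑ x_i y_i ≤ 0`, hence `E[Z] ≤ ∑ μ_i y_i`, and by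
permutation invariance `∑ μ_i y_i` is the value of `ν ↦ ∑ ν_i Z_i` at a point of `A`. -/

theorem setIntegral_le_of_le_const {Ω : Type*} [MeasurableSpace Ω] {P : Measure Ω}
    [IsFiniteMeasure P] {Z : Ω → ℝ} {s : Set Ω} {c : ℝ} (hs : MeasurableSet s)
    (hZ : IntegrableOn Z s P) (h : ∀ ω ∈ s, Z ω ≤ c) :
    ∫ ω in s, Z ω ∂P ≤ P.real s * c := by
  rw [← smul_eq_mul, ← setIntegral_const c]
  exact setIntegral_mono_on hZ (integrableOn_const (measure_ne_top P s)) hs h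

theorem coverage_zero {m : ℕ} (F : ℝ → ℝ) (y : Fin (m + 1) → ℝ) : coverage F y 0 = F (y 0) := by
  simp [coverage]

theorem coverage_succ {m : ℕ} (F : ℝ → ℝ) (y : Fin (m + 1) → ℝ) (i : Fin m) :
    coverage F y i.succ = F (y i.succ) - F (y i.castSucc) := by
  simp only [coverage, Fin.val_succ, Nat.succ_pos, dif_pos]
  rfl

section integral

variable {Ω : Type*} [MeasurableSpace Ω] {P : Measure Ω} [IsFiniteMeasure P] {Z : Ω → ℝ}

theorem setIntegral_le_sum_coverage_mul (hZmeas : Measurable Z) (hZint : Integrable Z P) :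
    ∀ {m : ℕ} {y : Fin (m + 1) → ℝ}, Monotone y →
      ∫ ω in {ω | Z ω ≤ y (Fin.last m)}, Z ω ∂P ≤
        ∑ i, coverage (fun t => P.real {ω | Z ω ≤ t}) y i * y i
  | 0, y, _ => by
    rw [Fin.sum_univ_one, coverage_zero]
    exact setIntegral_le_of_le_const (measurableSet_le hZmeas measurable_const)
      hZint.integrableOn fun ω hω => hω
  | m + 1, y, hy => by
    set s : ℝ → Set Ω := fun t => {ω | Z ω ≤ t}
    have hs (t : ℝ) : MeasurableSet (s t) := measurableSet_le hZmeas measurable_const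
    have hsub : s (y (Fin.last m).castSucc) ⊆ s (y (Fin.last (m + 1))) :=
      fun ω hω => hω.trans (hy (Fin.le_last _))
    -- `coverage F (y ∘ Fin.castSucc) i` unfolds to `coverage F y i.castSucc`.
    have hlower : ∫ ω in s (y (Fin.last m).castSucc), Z ω ∂P ≤
        ∑ i : Fin (m + 1), coverage (fun t => P.real (s t)) y i.castSucc * y i.castSucc :=
      setIntegral_le_sum_coverage_mul hZmeas hZint (hy.comp Fin.strictMono_castSucc.monotone)
    have hupper : ∫ ω in s (y (Fin.last (m + 1))) \ s (y (Fin.last m).castSucc), Z ω ∂P ≤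
        coverage (fun t => P.real (s t)) y (Fin.last (m + 1)) * y (Fin.last (m + 1)) := by
      rw [← Fin.succ_last, coverage_succ, Fin.succ_last, ← measureReal_sdiff hsub (hs _)]
      exact setIntegral_le_of_le_const ((hs _).diff (hs _)) hZint.integrableOn
        fun ω hω => hω.1
    rw [setIntegral_sdiff (hs _) hZint.integrableOn hsub] at hupper
    rw [Fin.sum_univ_castSucc]
    linarith

theorem integral_le_sum_coverage_mul (hZmeas : Measurable Z) (hZint : Integrable Z P)
    {m : ℕ} {y : Fin (m + 1) → ℝ} (hy : Monotone y) (hZy : ∀ᵐ ω ∂P, Z ω ≤ y (Fin.last m)) :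
    ∫ ω, Z ω ∂P ≤ ∑ i, coverage (fun t => P.real {ω | Z ω ≤ t}) y i * y i := by
  have h := setIntegral_le_sum_coverage_mul (P := P) hZmeas hZint hy
  rwa [Measure.restrict_eq_self_of_ae_mem (s := {ω | Z ω ≤ y (Fin.last m)}) hZy] at h

end integral

theorem sum_filter_val_lt_castSucc {M : Type*} [AddCommMonoid M] {m k : ℕ} (hk : k ≤ m + 1)
    (x : Fin (m + 2) → M) :
    ∑ i ∈ Finset.univ.filter (fun i : Fin (m + 2) => (i : ℕ) < k), x i =
      ∑ i ∈ Finset.univ.filter (fun i : Fin (m + 1) => (i : ℕ) < k), x i.castSucc := by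
  rw [Finset.sum_filter, Finset.sum_filter, Fin.sum_univ_castSucc, Fin.val_last,
    if_neg (by omega), add_zero]
  rfl

theorem sum_mul_le_sum_mul_last :
    ∀ {m : ℕ} {x y : Fin (m + 1) → ℝ},
      (∀ k < m + 1, 0 ≤ ∑ i ∈ Finset.univ.filter (fun i : Fin (m + 1) => (i : ℕ) < k), x i) →
      Monotone y → ∑ i, x i * y i ≤ (∑ i, x i) * y (Fin.last m)
  | 0, x, y, _, _ => by simp
  | m + 1, x, y, hx, hy => by
    have hx_init : ∀ k < m + 1, 0 ≤ ∑ i ∈ Finset.univ.filter (fun i : Fin (m + 1) =>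
        (i : ℕ) < k), x i.castSucc := fun k hk => by
      rw [← sum_filter_val_lt_castSucc (by omega)]
      exact hx k (by omega)
    have hinit_nonneg : 0 ≤ ∑ i : Fin (m + 1), x i.castSucc := by
      have h := hx (m + 1) (by omega)
      rwa [sum_filter_val_lt_castSucc le_rfl, Finset.filter_true_of_mem fun i _ => i.isLt] at h
    have ih := sum_mul_le_sum_mul_last hx_init (hy.comp Fin.strictMono_castSucc.monotone)
    have hlast := mul_le_mul_of_nonneg_left (hy (Fin.le_last (Fin.last m).castSucc)) hinit_nonneg
    simp only [Function.comp_apply] at ih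
    rw [Fin.sum_univ_castSucc, Fin.sum_univ_castSucc x, add_mul]
    linarith

theorem sum_mul_nonpos_of_mem_majorCone {m : ℕ} {x y : Fin (m + 1) → ℝ}
    (hx : x ∈ majorCone (m + 1)) (hy : Monotone y) : ∑ i, x i * y i ≤ 0 := by
  simpa [hx.2] using sum_mul_le_sum_mul_last hx.1 hy

theorem exists_sum_mul_le_of_mem_add_majorCone {m : ℕ} {A : Set (Fin (m + 1) → ℝ)}
    {w y : Fin (m + 1) → ℝ} (hw : w ∈ A + majorCone (m + 1)) (hy : Monotone y) :
    ∃ μ ∈ A, ∑ i, w i * y i ≤ ∑ i, μ i * y i := by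
  obtain ⟨μ, hμ, x, hx, rfl⟩ := hw
  refine ⟨μ, hμ, ?_⟩
  simp only [Pi.add_apply, add_mul, Finset.sum_add_distrib]
  linarith [sum_mul_nonpos_of_mem_majorCone hx hy]

theorem le_sortedVec_last {α : Type*} [LinearOrder α] {m : ℕ} (z : Fin (m + 1) → α)
    (j : Fin (m + 1)) : z j ≤ sortedVec z (Fin.last m) := by
  have h : sortedVec z ((Tuple.sort z)⁻¹ j) = z j := by simp [sortedVec]
  exact h ▸ Tuple.monotone_sort z (Fin.le_last _)

theorem sum_mul_sortedVec_le_sSup {n : ℕ} {A : Set (Fin n → ℝ)}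
    (hAsub : A ⊆ stdSimplex ℝ (Fin n))
    (hAperm : ∀ π : Equiv.Perm (Fin n), ∀ μ ∈ A, (fun i => μ (π i)) ∈ A)
    (z : Fin n → ℝ) {μ : Fin n → ℝ} (hμ : μ ∈ A) :
    ∑ i, μ i * sortedVec z i ≤ sSup ((fun ν => ∑ i, ν i * z i) '' A) := by
  set σ := Tuple.sort z
  have hbdd : BddAbove ((fun ν => ∑ i, ν i * z i) '' A) :=
    ((isCompact_stdSimplex ℝ (Fin n)).bddAbove_image
      (by fun_prop : Continuous fun ν : Fin n → ℝ => ∑ i, ν i * z i).continuousOn).mono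
      (Set.image_mono hAsub)
  refine le_csSup hbdd ⟨fun j => μ (σ⁻¹ j), hAperm σ⁻¹ μ hμ, ?_⟩
  change ∑ j, μ (σ⁻¹ j) * z j = _
  rw [← Equiv.sum_comp σ]
  simp [sortedVec, σ]

theorem prob_sup_ge_mean_ge_prob_coverage_general
    {Ω : Type*} [MeasurableSpace Ω] (P : Measure Ω) [IsProbabilityMeasure P]
    (n : ℕ) (hn : 1 ≤ n)
    (A : Set (Fin n → ℝ)) (hAsub : A ⊆ stdSimplex ℝ (Fin n))
    (hAperm : ∀ π : Equiv.Perm (Fin n), ∀ μ ∈ A, (fun i => μ (π i)) ∈ A)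
    (Z : Ω → ℝ) (hZmeas : Measurable Z) (hZint : Integrable Z P)
    (M : ℝ) (hM_ub : ∀ᵐ ω ∂P, Z ω ≤ M)
    (Zs : Fin (n - 1) → Ω → ℝ)
    (F : ℝ → ℝ) (hF : F = fun t => (P {ω | Z ω ≤ t}).toReal)
    (W : Ω → Fin n → ℝ)
    (hW : W = fun ω => coverage F (sortedVec fun j => fullVec Zs M j ω)) :
    P {ω | W ω ∈ A + majorCone n} ≤
      P {ω | (∫ x, Z x ∂P) ≤
        sSup ((fun μ => ∑ i, μ i * fullVec Zs M i ω) '' A)} := by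
  obtain ⟨m, rfl⟩ : ∃ m, n = m + 1 := ⟨n - 1, by omega⟩
  subst hF hW
  refine measure_mono fun ω hω => ?_
  set y := sortedVec fun j => fullVec Zs M j ω
  have hy : Monotone y := Tuple.monotone_sort _
  have hMy : M ≤ y (Fin.last m) :=
    calc M = fullVec Zs M (Fin.last m) ω := by simp [fullVec]
      _ ≤ y (Fin.last m) := le_sortedVec_last (fun j => fullVec Zs M j ω) _
  obtain ⟨μ, hμA, hWμ⟩ := exists_sum_mul_le_of_mem_add_majorCone hω hy
  calc ∫ x, Z x ∂P
      ≤ ∑ i, coverage (fun t => P.real {ω | Z ω ≤ t}) y i * y i :=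
        integral_le_sum_coverage_mul hZmeas hZint hy (hM_ub.mono fun _ h => h.trans hMy)
    _ ≤ ∑ i, μ i * y i := hWμ
    _ ≤ _ := sum_mul_sortedVec_le_sSup hAsub hAperm _ hμA

/-- let `A ⊆ Δ^n` be measurable and permutation invariant, `Z` an integrable
real random variable with cdf `F` and finite essential supremum `M`, `Z_1, …, Z_{n-1}` iid
copies of `Z`, `Z_n := M`, and `W` the coverage vector of the order statistics. Then
`P[sup_{μ ∈ A} ∑ μ_i Z_i ≥ E[Z]] ≥ P[W ∈ A + K^n]`. -/
theorem prob_sup_ge_mean_ge_prob_coverage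
    {Ω : Type*} [MeasurableSpace Ω] (P : Measure Ω) [IsProbabilityMeasure P]
    (n : ℕ) (hn : 1 ≤ n)
    (A : Set (Fin n → ℝ)) (hAsub : A ⊆ stdSimplex ℝ (Fin n)) (hAmeas : MeasurableSet A)
    (hAperm : ∀ π : Equiv.Perm (Fin n), ∀ μ ∈ A, (fun i => μ (π i)) ∈ A)
    (Z : Ω → ℝ) (hZmeas : Measurable Z) (hZint : Integrable Z P)
    (M : ℝ) (hM_ub : ∀ᵐ ω ∂P, Z ω ≤ M) (hM_least : ∀ c : ℝ, (∀ᵐ ω ∂P, Z ω ≤ c) → M ≤ c)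
    (Zs : Fin (n - 1) → Ω → ℝ) (hZs_meas : ∀ i, Measurable (Zs i))
    (hZs_indep : iIndepFun Zs P)
    (hZs_law : ∀ i, Measure.map (Zs i) P = Measure.map Z P)
    (F : ℝ → ℝ) (hF : F = fun t => (P {ω | Z ω ≤ t}).toReal)
    (W : Ω → Fin n → ℝ)
    (hW : W = fun ω => coverage F (sortedVec fun j => fullVec Zs M j ω)) :
    P {ω | W ω ∈ A + majorCone n} ≤
      P {ω | (∫ x, Z x ∂P) ≤
        sSup ((fun μ => ∑ i, μ i * fullVec Zs M i ω) '' A)} :=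
  prob_sup_ge_mean_ge_prob_coverage_general P n hn A hAsub hAperm Z hZmeas hZint M hM_ub Zs F hF W
    hW
end

section
/- Let Z be a real random variable with cdf F(z) = P[Z ≤ z] and finite essential supremum, let Z_1,…,Z_{n−1} be iid with the same law as Z, set Z_n := esssup Z, let Z_(1) ≤ ⋯ ≤ Z_(n) be the order statistics of Z_1,…,Z_n, and define the coverages W_i = F(Z_(i)) − F(Z_(i−1)) for i ∈ {1,…,n}, with F(Z_(0)) := 0. Let U_1,…,U_{n−1} be iid uniform random variables on [0,1], let U_(1) ≤ ⋯ ≤ U_(n−1) be their order statistics with conventions U_(0) := 0 and U_(n) := 1, and let ν ∈ Δ^n be the spacings vector ν_i = U_(i) − U_(i−1) (which is uniformly distributed on Δ^n). Then for every Lebesgue measurable A ⊆ Δ^n (with A + K^n measurable), P[ W ∈ A + K^n ] ≥ P[ ν ∈ A + K^n ]. -/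
open MeasureTheory ProbabilityTheory Pointwise

/-- The augmented uniform order statistics `U_(k)`, `k ∈ [n]`, with the convention `U_(n) := 1`
(the index `k : Fin n` is `0`-based: `augOrder U k = U_(k+1)`). -/
noncomputable def augOrder {n : ℕ} (U : Fin (n - 1) → ℝ) (k : Fin n) : ℝ :=
  if h : (k : ℕ) + 1 < n then sortedVec U ⟨(k : ℕ), by omega⟩ else 1

/-- The spacings vector `ν_i = U_(i) - U_(i-1)`, `i ∈ [n]`, with `U_(0) := 0`, `U_(n) := 1`. -/
noncomputable def spacings {n : ℕ} (U : Fin (n - 1) → ℝ) (i : Fin n) : ℝ :=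
  augOrder U i -
    (if h : 0 < (i : ℕ) then augOrder U ⟨(i : ℕ) - 1, by have := i.isLt; omega⟩ else 0)

/-!
Quantile coupling. Let `G` be the quantile function of the law `μ` of `Z`. Then the `G (U_i)` are
an iid sample from `μ`, and almost surely `G (U_i) ≤ M`, so `W` has the law of the coverage vector
of `G (U_1), …, G (U_{n-1}), M`. As `G` is monotone it commutes with sorting, so the `k`-th partial
sum of that coverage vector is `F (G (U_(k))) ≥ U_(k)`, the `k`-th partial sum of `ν`, while both
totals are `1 = F M`. Hence, pointwise, the coverage vector is `ν` plus an element of `K^n`, and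
`A + K^n + K^n = A + K^n`.
-/

open Set Filter Topology

section BwdDiff

variable {β : Type*} [AddCommGroup β] {n : ℕ}

def bwdDiff (f : Fin n → β) (i : Fin n) : β :=
  f i - if h : 0 < (i : ℕ) then f ⟨(i : ℕ) - 1, by omega⟩ else 0

theorem bwdDiff_sub (f g : Fin n → β) : bwdDiff (f - g) = bwdDiff f - bwdDiff g := by
  funext i
  simp only [bwdDiff, Pi.sub_apply]
  split_ifs <;> abel

theorem sum_filter_lt_bwdDiff (f : Fin n → β) {k : ℕ} (hk : k ≤ n) :
    ∑ i ∈ Finset.univ.filter (fun i : Fin n => (i : ℕ) < k), bwdDiff f i =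
      if h : 0 < k then f ⟨k - 1, by omega⟩ else 0 := by
  induction k with
  | zero => simp
  | succ k ih =>
    have hfilter : Finset.univ.filter (fun i : Fin n => (i : ℕ) < k + 1) =
        insert ⟨k, hk⟩ (Finset.univ.filter fun i : Fin n => (i : ℕ) < k) := by
      ext i
      simp only [Finset.mem_filter, Finset.mem_insert, Finset.mem_univ, true_and, Fin.ext_iff]
      omega
    rw [hfilter, Finset.sum_insert (by simp), ih (by omega)]
    by_cases hk0 : 0 < k <;> simp [bwdDiff, hk0]

theorem measurable_bwdDiff [MeasurableSpace β] [MeasurableSub₂ β] :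
    Measurable (bwdDiff : (Fin n → β) → Fin n → β) := by
  refine measurable_pi_lambda _ fun i => (measurable_pi_apply i).sub ?_
  split_ifs
  exacts [measurable_pi_apply _, measurable_const]

end BwdDiff

section MajorCone

variable {n : ℕ}

theorem majorCone_add_majorCone_subset : majorCone n + majorCone n ⊆ majorCone n := by
  rintro _ ⟨x, hx, y, hy, rfl⟩
  refine ⟨fun k hk => ?_, ?_⟩
  · simpa only [Pi.add_apply, Finset.sum_add_distrib] using add_nonneg (hx.1 k hk) (hy.1 k hk)
  · simp only [Pi.add_apply, Finset.sum_add_distrib, hx.2, hy.2, add_zero]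

theorem add_mem_add_majorCone {A : Set (Fin n → ℝ)} {x d : Fin n → ℝ}
    (hx : x ∈ A + majorCone n) (hd : d ∈ majorCone n) : x + d ∈ A + majorCone n := by
  have : x + d ∈ A + (majorCone n + majorCone n) := add_assoc A _ _ ▸ add_mem_add hx hd
  exact add_subset_add_left majorCone_add_majorCone_subset this

theorem bwdDiff_mem_majorCone {h : Fin n → ℝ} (h_nonneg : 0 ≤ h)
    (h_last : ∀ i : Fin n, (i : ℕ) + 1 = n → h i = 0) : bwdDiff h ∈ majorCone n := by
  refine ⟨fun k hk => ?_, ?_⟩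
  · rw [sum_filter_lt_bwdDiff h hk.le]
    split_ifs
    exacts [h_nonneg _, le_rfl]
  · have htotal := sum_filter_lt_bwdDiff h le_rfl
    rw [Finset.filter_true_of_mem fun i _ => i.isLt] at htotal
    rw [htotal]
    split_ifs
    exacts [h_last _ (by dsimp only; omega), rfl]

end MajorCone

section ExtendLast

variable {α : Type*} {n : ℕ}

def extendLast (n : ℕ) (c : α) (v : Fin (n - 1) → α) (i : Fin n) : α :=
  if h : (i : ℕ) < n - 1 then v ⟨i, h⟩ else c

theorem extendLast_comp_perm (c : α) (v : Fin (n - 1) → α) (τ : Equiv.Perm (Fin (n - 1))) :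
    extendLast n c (v ∘ τ) =
      extendLast n c v ∘ τ.extendDomain (Fin.castLEquiv (n.sub_le 1)) := by
  funext i
  by_cases h : (i : ℕ) < n - 1
  · rw [Function.comp_apply,
      Equiv.Perm.extendDomain_apply_subtype τ (Fin.castLEquiv (n.sub_le 1)) (b := i) h]
    simp [extendLast, h]
  · rw [Function.comp_apply, Equiv.Perm.extendDomain_apply_not_subtype τ _ (b := i) h]
    simp [extendLast, h]

theorem measurable_extendLast [MeasurableSpace α] (c : α) :
    Measurable (extendLast n c : (Fin (n - 1) → α) → Fin n → α) := by
  refine measurable_pi_lambda _ fun i => ?_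
  simp only [extendLast]
  split_ifs
  exacts [measurable_pi_apply _, measurable_const]

end ExtendLast

section Sorting

variable {α β : Type*} [LinearOrder α] [LinearOrder β]

theorem sortedVec_comp_of_monotoneOn {m : ℕ} {g : α → β} {s : Set α} (hg : MonotoneOn g s)
    {z : Fin m → α} (hz : ∀ i, z i ∈ s) : sortedVec (g ∘ z) = g ∘ sortedVec z :=
  (Tuple.comp_sort_eq_comp_iff_monotone.mpr
    fun _ _ hij => hg (hz _) (hz _) (Tuple.monotone_sort z hij)).symm

variable {n : ℕ}

theorem monotone_extendLast {c : α} {v : Fin (n - 1) → α} (hv : Monotone v)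
    (hc : ∀ i, v i ≤ c) : Monotone (extendLast n c v) := by
  intro i j hij
  simp only [extendLast]
  split_ifs with hi hj hj
  · exact hv (Fin.mk_le_mk.mpr hij)
  · exact hc _
  · exact absurd (lt_of_le_of_lt (Fin.le_def.mp hij) hj) hi
  · exact le_rfl

theorem sortedVec_extendLast {c : α} {v : Fin (n - 1) → α} (hc : ∀ i, v i ≤ c) :
    sortedVec (extendLast n c v) = extendLast n c (sortedVec v) := by
  have hperm := extendLast_comp_perm c v (Tuple.sort v)
  have hmono : Monotone (extendLast n c (v ∘ Tuple.sort v)) :=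
    monotone_extendLast (Tuple.monotone_sort v) fun i => hc _
  rw [hperm] at hmono
  change _ = extendLast n c (v ∘ Tuple.sort v)
  rw [hperm]
  exact (Tuple.comp_sort_eq_comp_iff_monotone.mpr hmono).symm

theorem augOrder_eq_extendLast (u : Fin (n - 1) → ℝ) :
    augOrder u = extendLast n 1 (sortedVec u) := by
  funext k
  simp only [augOrder, extendLast]
  split_ifs <;> first | rfl | omega

end Sorting

section SortMeasurable

variable {m : ℕ}

theorem sortedVec_apply_le_iff (z : Fin m → ℝ) (j : Fin m) (a : ℝ) :
    sortedVec z j ≤ a ↔ (j : ℕ) < (Finset.univ.filter fun i => z i ≤ a).card := by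
  change (z ∘ Tuple.sort z) j ≤ a ↔ _
  rw [← Tuple.lt_card_le_iff_apply_le_of_monotone (Tuple.monotone_sort z),
    Finset.card_equiv (Tuple.sort z) (t := {i | z i ≤ a}) (by simp)]

theorem measurable_sortedVec : Measurable (sortedVec : (Fin m → ℝ) → Fin m → ℝ) := by
  refine measurable_pi_lambda _ fun j => measurable_of_Iic fun a => ?_
  have hcard : Measurable fun z : Fin m → ℝ => (Finset.univ.filter fun i => z i ≤ a).card := by
    simp only [Finset.card_filter]
    exact Finset.measurable_sum _ fun i _ =>
      Measurable.ite (measurableSet_le (measurable_pi_apply i) measurable_const)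
        measurable_const measurable_const
  have hpre : (fun z : Fin m → ℝ => sortedVec z j) ⁻¹' Iic a =
      (fun z : Fin m → ℝ => (Finset.univ.filter fun i => z i ≤ a).card) ⁻¹' {c | (j : ℕ) < c} := by
    ext z
    exact sortedVec_apply_le_iff z j a
  rw [hpre]
  exact hcard trivial

end SortMeasurable

theorem volume_Ioo_zero_one_inter_Iic {c : ℝ} (hc : c ≤ 1) :
    volume (Ioo 0 1 ∩ Iic c) = ENNReal.ofReal c := by
  refine le_antisymm ?_ ?_
  · calc volume (Ioo 0 1 ∩ Iic c) ≤ volume (Ioc 0 c) :=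
          measure_mono fun x hx => ⟨hx.1.1, hx.2⟩
      _ = ENNReal.ofReal c := by simp
  · calc ENNReal.ofReal c = volume (Ioo 0 c) := by simp
      _ ≤ volume (Ioo 0 1 ∩ Iic c) :=
          measure_mono fun x hx => ⟨⟨hx.1, hx.2.trans_le hc⟩, hx.2.le⟩

instance isProbabilityMeasure_volume_restrict_unitInterval :
    IsProbabilityMeasure (volume.restrict (Icc (0 : ℝ) 1)) :=
  ⟨by simp⟩

section Quantile

-- Only meaningful for `u ∈ (0, 1)`: elsewhere the set may be empty or unbounded below.
noncomputable def quantile (μ : Measure ℝ) (u : ℝ) : ℝ := sInf {t | u ≤ cdf μ t}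

variable {μ : Measure ℝ}

theorem bddBelow_setOf_le_cdf {u : ℝ} (hu : 0 < u) : BddBelow {t | u ≤ cdf μ t} := by
  obtain ⟨t₀, ht₀⟩ := ((tendsto_cdf_atBot μ).eventually_lt_const hu).exists_forall_of_atBot
  exact ⟨t₀, fun t ht => le_of_not_gt fun htt₀ => (ht.trans_lt (ht₀ t htt₀.le)).false⟩

theorem nonempty_setOf_le_cdf {u : ℝ} (hu : u < 1) : {t | u ≤ cdf μ t}.Nonempty :=
  ((tendsto_cdf_atTop μ).eventually_const_le hu).exists

theorem quantile_le_iff {u : ℝ} (hu : u ∈ Ioo 0 1) {t : ℝ} :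
    quantile μ u ≤ t ↔ u ≤ cdf μ t := by
  refine ⟨fun ht => ?_, fun ht => csInf_le (bddBelow_setOf_le_cdf hu.1) ht⟩
  -- right-continuity of the cdf puts the infimum in the set
  have hcdf : Tendsto (cdf μ) (𝓝[>] quantile μ u) (𝓝 (cdf μ (quantile μ u))) :=
    ((cdf μ).right_continuous _).mono_left (nhdsWithin_mono _ Ioi_subset_Ici_self)
  refine (ge_of_tendsto hcdf (eventually_nhdsWithin_of_forall fun s hs => ?_)).trans
    (monotone_cdf μ ht)
  obtain ⟨r, hr, hrs⟩ := exists_lt_of_csInf_lt (nonempty_setOf_le_cdf hu.2) hs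
  exact hr.trans (monotone_cdf μ hrs.le)

theorem le_cdf_quantile {u : ℝ} (hu : u ∈ Ioo 0 1) : u ≤ cdf μ (quantile μ u) :=
  (quantile_le_iff hu).1 le_rfl

theorem monotoneOn_quantile : MonotoneOn (quantile μ) (Ioo 0 1) :=
  fun _ ha _ hb hab => (quantile_le_iff ha).2 (hab.trans (le_cdf_quantile hb))

theorem aemeasurable_quantile : AEMeasurable (quantile μ) (volume.restrict (Icc 0 1)) := by
  rw [← Measure.restrict_congr_set Ioo_ae_eq_Icc]
  exact aemeasurable_restrict_of_monotoneOn measurableSet_Ioo monotoneOn_quantile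

variable [IsProbabilityMeasure μ]

theorem map_quantile_uniform : (volume.restrict (Icc 0 1)).map (quantile μ) = μ := by
  refine Measure.ext_of_Iic _ _ fun t => ?_
  rw [Measure.map_apply_of_aemeasurable aemeasurable_quantile measurableSet_Iic,
    ← Measure.restrict_congr_set Ioo_ae_eq_Icc, Measure.restrict_apply' measurableSet_Ioo,
    ← ofReal_cdf]
  have hpre : quantile μ ⁻¹' Iic t ∩ Ioo 0 1 = Ioo 0 1 ∩ Iic (cdf μ t) := by
    ext u
    simp only [mem_inter_iff, mem_preimage, mem_Iic]
    exact ⟨fun h => ⟨h.2, (quantile_le_iff h.2).1 h.1⟩,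
      fun h => ⟨(quantile_le_iff h.1).2 h.2, h.1⟩⟩
  rw [hpre, volume_Ioo_zero_one_inter_Iic (cdf_le_one μ t)]

end Quantile

section RandomVariables

variable {Ω : Type*} [MeasurableSpace Ω] {P : Measure Ω}

theorem aemeasurable_of_map_eq {γ : Type*} [MeasurableSpace γ] {X : Ω → γ} {ν : Measure γ}
    [IsProbabilityMeasure ν] (hX : P.map X = ν) : AEMeasurable X P :=
  .of_map_ne_zero (hX ▸ IsProbabilityMeasure.ne_zero ν)

theorem cdf_map_apply [IsProbabilityMeasure P] {X : Ω → ℝ} (hX : Measurable X) (t : ℝ) :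
    cdf (P.map X) t = (P {ω | X ω ≤ t}).toReal := by
  have := Measure.isProbabilityMeasure_map (μ := P) hX.aemeasurable
  rw [cdf_eq_real, measureReal_def, Measure.map_apply hX measurableSet_Iic]
  rfl

theorem cdf_map_eq_one_of_ae_le [IsProbabilityMeasure P] {X : Ω → ℝ} (hX : Measurable X) {M : ℝ}
    (hM : ∀ᵐ ω ∂P, X ω ≤ M) : cdf (P.map X) M = 1 := by
  have hmeas : NullMeasurableSet {ω | X ω ≤ M} P :=
    (measurableSet_le hX measurable_const).nullMeasurableSet
  rw [cdf_map_apply hX, (ae_iff_measure_eq hmeas).1 hM, measure_univ, ENNReal.toReal_one]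

theorem ae_mem_Ioo_of_map_eq_uniform {U : Ω → ℝ} (hU : P.map U = volume.restrict (Icc 0 1)) :
    ∀ᵐ ω ∂P, U ω ∈ Ioo 0 1 := by
  refine ae_of_ae_map (aemeasurable_of_map_eq hU) ?_
  rw [hU, ← Measure.restrict_congr_set Ioo_ae_eq_Icc]
  exact ae_restrict_mem measurableSet_Ioo

theorem map_quantile_comp {U : Ω → ℝ} (hU : P.map U = volume.restrict (Icc 0 1))
    (μ : Measure ℝ) [IsProbabilityMeasure μ] : P.map (quantile μ ∘ U) = μ := by
  rw [← AEMeasurable.map_map_of_aemeasurable (hU ▸ aemeasurable_quantile)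
    (aemeasurable_of_map_eq hU), hU, map_quantile_uniform]

end RandomVariables

theorem coverage_eq_bwdDiff {n : ℕ} (F : ℝ → ℝ) (z : Fin n → ℝ) :
    coverage F z = bwdDiff (F ∘ z) :=
  rfl

theorem spacings_eq_bwdDiff {n : ℕ} (u : Fin (n - 1) → ℝ) : spacings u = bwdDiff (augOrder u) :=
  rfl

theorem measurable_coverage {n : ℕ} {F : ℝ → ℝ} (hF : Monotone F) :
    Measurable (coverage F : (Fin n → ℝ) → Fin n → ℝ) :=
  measurable_bwdDiff.comp <|
    measurable_pi_lambda _ fun i => hF.measurable.comp (measurable_pi_apply i)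

theorem coverage_mem_add_majorCone_of_spacings_mem {n : ℕ} {F G : ℝ → ℝ} {M : ℝ} {I : Set ℝ}
    (hG : MonotoneOn G I) (hFG : ∀ x ∈ I, x ≤ F (G x)) (hGM : ∀ x ∈ I, G x ≤ M) (hFM : F M = 1)
    {A : Set (Fin n → ℝ)} {u : Fin (n - 1) → ℝ} (hu : ∀ i, u i ∈ I)
    (hν : spacings u ∈ A + majorCone n) :
    coverage F (sortedVec (extendLast n M (G ∘ u))) ∈ A + majorCone n := by
  set s := sortedVec u
  have hsort : sortedVec (extendLast n M (G ∘ u)) = extendLast n M (G ∘ s) := by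
    rw [sortedVec_extendLast (v := G ∘ u) fun i => hGM _ (hu i),
      sortedVec_comp_of_monotoneOn hG hu]
  have hgap : coverage F (sortedVec (extendLast n M (G ∘ u))) =
      spacings u + bwdDiff (F ∘ extendLast n M (G ∘ s) - extendLast n 1 s) := by
    rw [coverage_eq_bwdDiff, hsort, spacings_eq_bwdDiff, augOrder_eq_extendLast, bwdDiff_sub,
      add_sub_cancel]
  rw [hgap]
  refine add_mem_add_majorCone hν (bwdDiff_mem_majorCone (fun i => ?_) fun i hi => ?_)
  · simp only [Pi.zero_apply, Pi.sub_apply, Function.comp_apply, extendLast, sub_nonneg]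
    split_ifs
    exacts [hFG _ (hu _), hFM.ge]
  · simp [extendLast, show ¬ (i : ℕ) < n - 1 by omega, hFM]

theorem prob_coverage_ge_prob_spacings_general
    {Ω : Type*} [MeasurableSpace Ω] (P : Measure Ω) [IsProbabilityMeasure P]
    (n : ℕ)
    (Z : Ω → ℝ) (hZmeas : Measurable Z)
    (M : ℝ) (hM_ub : ∀ᵐ ω ∂P, Z ω ≤ M)
    (Zs : Fin (n - 1) → Ω → ℝ)
    (hZs_indep : iIndepFun Zs P)
    (hZs_law : ∀ i, Measure.map (Zs i) P = Measure.map Z P)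
    (F : ℝ → ℝ) (hF : F = fun t => (P {ω | Z ω ≤ t}).toReal)
    (W : Ω → Fin n → ℝ)
    (hW : W = fun ω => coverage F (sortedVec fun j => fullVec Zs M j ω))
    (Us : Fin (n - 1) → Ω → ℝ)
    (hUs_indep : iIndepFun Us P)
    (hUs_law : ∀ i, Measure.map (Us i) P = volume.restrict (Set.Icc (0 : ℝ) 1))
    (A : Set (Fin n → ℝ))
    (hAKmeas : MeasurableSet (A + majorCone n)) :
    P {ω | spacings (fun i => Us i ω) ∈ A + majorCone n} ≤
      P {ω | W ω ∈ A + majorCone n} := by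
  set μ := P.map Z
  have : IsProbabilityMeasure μ := Measure.isProbabilityMeasure_map hZmeas.aemeasurable
  have hFμ : F = cdf μ := funext fun t => by rw [hF, cdf_map_apply hZmeas]
  have hFM : F M = 1 := hFμ ▸ cdf_map_eq_one_of_ae_le hZmeas hM_ub
  set Ys := fun i => quantile μ ∘ Us i
  have hZsYs : ∀ i, IdentDistrib (Zs i) (Ys i) P P := fun i =>
    ⟨aemeasurable_of_map_eq (hZs_law i), aemeasurable_of_map_eq (map_quantile_comp (hUs_law i) μ),
      by rw [hZs_law, map_quantile_comp (hUs_law i)]⟩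
  have hYs_indep : iIndepFun Ys P := hUs_indep.comp₀ _
    (fun i => aemeasurable_of_map_eq (hUs_law i)) fun i => hUs_law i ▸ aemeasurable_quantile
  have hcov : Measurable fun z => coverage F (sortedVec (extendLast n M z)) :=
    (measurable_coverage (hFμ ▸ monotone_cdf μ)).comp
      (measurable_sortedVec.comp (measurable_extendLast M))
  have hWYs : P {ω | W ω ∈ A + majorCone n} =
      P {ω | coverage F (sortedVec (extendLast n M fun i => Ys i ω)) ∈ A + majorCone n} := by
    subst hW
    exact ((IdentDistrib.pi hZsYs hZs_indep hYs_indep).comp hcov).measure_mem_eq hAKmeas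
  rw [hWYs]
  refine measure_mono_ae ?_
  filter_upwards [ae_all_iff.2 fun i => ae_mem_Ioo_of_map_eq_uniform (hUs_law i)] with ω hω hν
  exact coverage_mem_add_majorCone_of_spacings_mem monotoneOn_quantile
    (fun x hx => hFμ ▸ le_cdf_quantile hx)
    (fun x hx => (quantile_le_iff hx).2 (hFμ ▸ hFM ▸ hx.2.le)) hFM hω hν

/-- with `W` the coverage vector of the order statistics of `Z_1, …, Z_{n-1}`
(iid copies of `Z`) augmented by `Z_n := esssup Z`, and `ν` the uniform spacings vector built
from `n-1` iid `U[0,1]` variables, for every measurable `A ⊆ Δ^n` with `A + K^n` measurable,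
`P[W ∈ A + K^n] ≥ P[ν ∈ A + K^n]`. -/
theorem prob_coverage_ge_prob_spacings
    {Ω : Type*} [MeasurableSpace Ω] (P : Measure Ω) [IsProbabilityMeasure P]
    (n : ℕ) (hn : 1 ≤ n)
    (Z : Ω → ℝ) (hZmeas : Measurable Z)
    (M : ℝ) (hM_ub : ∀ᵐ ω ∂P, Z ω ≤ M) (hM_least : ∀ c : ℝ, (∀ᵐ ω ∂P, Z ω ≤ c) → M ≤ c)
    (Zs : Fin (n - 1) → Ω → ℝ) (hZs_meas : ∀ i, Measurable (Zs i))
    (hZs_indep : iIndepFun Zs P)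
    (hZs_law : ∀ i, Measure.map (Zs i) P = Measure.map Z P)
    (F : ℝ → ℝ) (hF : F = fun t => (P {ω | Z ω ≤ t}).toReal)
    (W : Ω → Fin n → ℝ)
    (hW : W = fun ω => coverage F (sortedVec fun j => fullVec Zs M j ω))
    (Us : Fin (n - 1) → Ω → ℝ) (hUs_meas : ∀ i, Measurable (Us i))
    (hUs_indep : iIndepFun Us P)
    (hUs_law : ∀ i, Measure.map (Us i) P = volume.restrict (Set.Icc (0 : ℝ) 1))
    (A : Set (Fin n → ℝ)) (hAsub : A ⊆ stdSimplex ℝ (Fin n)) (hAmeas : MeasurableSet A)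
    (hAKmeas : MeasurableSet (A + majorCone n)) :
    P {ω | spacings (fun i => Us i ω) ∈ A + majorCone n} ≤
      P {ω | W ω ∈ A + majorCone n} :=
  prob_coverage_ge_prob_spacings_general P n Z hZmeas M hM_ub Zs hZs_indep hZs_law F hF W hW Us
    hUs_indep hUs_law A hAKmeas
end
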